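/- Let α be irrational, 𝔭 ∈ C^∞(𝕋,(0,1)) with ∫ ln 𝔭 > ∫ ln(1-𝔭) (asymmetric case). Then the function ρ(x) = (1/𝔭(x)) Σ_{k=0}^{∞} Π_{j=1}^{k} (1-𝔭(x+jα))/𝔭(x+jα) is well defined (the series converges for almost every x with respect to Lebesgue measure), and ρ satisfies the stationarity equation ρ(x) = 𝔭(x-α)ρ(x-α) + (1-𝔭(x+α))ρ(x+α) for almost every x. -/

import Mathlib

/-!
Write `r = (1 - p) / p` and `g = log r`, a continuous `1`-periodic function with `∫₀¹ g < 0`.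
The `k`-th term of the series is the exponential of the Birkhoff sum `∑_{j=1}^k g (x + j α)`.
For irrational `α` the Birkhoff averages of a continuous periodic function converge uniformly to
its mean (Weyl). The observables for which this holds form a closed subspace, because the
averaging operators are contractions; it contains the constants, and every character `e_n` with
`n ≠ 0`, which is an eigenvector of the translation with eigenvalue `e_n(α) ≠ 1` and hence a
coboundary; and the characters span a dense subspace. So the terms are eventually dominated by
`exp (∫₀¹ g / 2) ^ k` and the series converges at every `x`.

Stationarity is then algebraic: `S = p ρ` satisfies the renewal equation
`S x = 1 + r (x + α) * S (x + α)`, and `1 + r = 1 / p`.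
-/

/-- The candidate stationary density
`ρ(x) = (1/p(x)) ∑_{k=0}^∞ ∏_{j=1}^{k} (1-p(x+jα))/p(x+jα)`. -/
noncomputable def statDensity (p : ℝ → ℝ) (α : ℝ) (x : ℝ) : ℝ :=
  (1 / p x) * ∑' k : ℕ, ∏ j ∈ Finset.Icc 1 k, (1 - p (x + (j:ℝ) * α)) / p (x + (j:ℝ) * α)

open Filter Topology Finset Function MeasureTheory

section LinearBirkhoffAverage

variable {𝕜 E : Type*} [RCLike 𝕜] [NormedAddCommGroup E] [NormedSpace 𝕜 E]

theorem LinearMap.birkhoffAverage_id (U : E →ₗ[𝕜] E) (n : ℕ) :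
    birkhoffAverage 𝕜 U _root_.id n = ⇑((n : 𝕜)⁻¹ • ∑ k ∈ Finset.range n, U ^ k) := by
  ext x
  simp [birkhoffAverage, birkhoffSum, LinearMap.sum_apply, Module.End.pow_apply]

theorem LinearMap.tendsto_birkhoffAverage_of_mem_closure_span (U : E →ₗ[𝕜] E)
    (hU : LipschitzWith 1 U) (l : E →L[𝕜] E) {s : Set E}
    (hs : ∀ x ∈ s, Tendsto (birkhoffAverage 𝕜 U _root_.id · x) atTop (𝓝 (l x))) {x : E}
    (hx : x ∈ (Submodule.span 𝕜 s).topologicalClosure) :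
    Tendsto (birkhoffAverage 𝕜 U _root_.id · x) atTop (𝓝 (l x)) := by
  have hclosed : IsClosed {x | Tendsto (birkhoffAverage 𝕜 U _root_.id · x) atTop (𝓝 (l x))} :=
    isClosed_setOfPred_tendsto_birkhoffAverage 𝕜 hU uniformContinuous_id l.continuous
  refine closure_minimal (fun y hy => ?_) hclosed hx
  induction hy using Submodule.span_induction with
  | mem y hy => exact hs y hy
  | zero =>
    simp only [Set.mem_ofPred_eq, birkhoffAverage_id, map_zero]
    exact tendsto_const_nhds
  | add y z _ _ hy hz =>
    simp only [Set.mem_ofPred_eq, birkhoffAverage_id, map_add] at hy hz ⊢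
    exact hy.add hz
  | smul c y _ hy =>
    simp only [Set.mem_ofPred_eq, birkhoffAverage_id, map_smul] at hy ⊢
    exact hy.const_smul c

theorem LinearMap.tendsto_birkhoffAverage_of_apply_eq_smul (U : E →ₗ[𝕜] E)
    (hU : LipschitzWith 1 U) {x : E} {c : 𝕜} (hc : c ≠ 1) (hx : U x = c • x) :
    Tendsto (birkhoffAverage 𝕜 U _root_.id · x) atTop (𝓝 0) := by
  -- `x = U y - y` is a coboundary, so its Birkhoff averages telescope.
  set y := (c - 1)⁻¹ • x
  have hxy : U y - y = x := by
    rw [map_smul, hx, smul_smul, ← sub_smul, ← mul_sub_one, inv_mul_cancel₀ (sub_ne_zero.2 hc),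
      one_smul]
  have hbdd : Bornology.IsBounded (Set.range fun n => _root_.id (U^[n] y)) := by
    refine isBounded_iff_forall_norm_le.2 ⟨‖y‖, Set.forall_mem_range.2 fun n => ?_⟩
    simpa [_root_.iterate_map_zero] using (hU.iterate n).dist_le_mul y 0
  have := tendsto_birkhoffAverage_apply_sub_birkhoffAverage 𝕜 hbdd
  rw [← hxy]
  simpa only [birkhoffAverage_id, map_sub] using this

end LinearBirkhoffAverage

namespace AddCircle

variable {T : ℝ}

noncomputable def translate (a : AddCircle T) : C(AddCircle T, ℂ) →ₗ[ℂ] C(AddCircle T, ℂ) :=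
  (ContinuousMap.compRightAlgHom ℂ ℂ (ContinuousMap.addRight a)).toLinearMap

theorem translate_apply (a : AddCircle T) (F : C(AddCircle T, ℂ)) (y : AddCircle T) :
    translate a F y = F (y + a) :=
  rfl

theorem translate_fourier (a : AddCircle T) (n : ℤ) :
    translate a (fourier n) = fourier n a • fourier n := by
  ext y
  simp [translate_apply, fourier_apply, smul_add, toCircle_add, mul_comm]

theorem birkhoffAverage_translate_apply (a : AddCircle T) (F : C(AddCircle T, ℂ)) (n : ℕ)
    (y : AddCircle T) :
    birkhoffAverage ℂ (translate a) id n F y = birkhoffAverage ℂ (· + a) F n y := by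
  have iterate_apply : ∀ k (G : C(AddCircle T, ℂ)), (translate a)^[k] G y = G (y + k • a) := by
    intro k
    induction k with
    | zero => simp
    | succ k ih => intro G; rw [iterate_succ_apply, ih, translate_apply, succ_nsmul, add_assoc]
  simp [birkhoffAverage, birkhoffSum, iterate_apply, add_right_iterate]

variable [hT : Fact (0 < T)]

theorem lipschitzWith_translate (a : AddCircle T) : LipschitzWith 1 (translate a) :=
  LipschitzWith.of_dist_le_mul fun F G => by
    rw [NNReal.coe_one, one_mul]
    exact (ContinuousMap.dist_le dist_nonneg).2 fun y => ContinuousMap.dist_apply_le_dist (y + a)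

noncomputable def meanCLM : C(AddCircle T, ℂ) →L[ℂ] C(AddCircle T, ℂ) :=
  LinearMap.mkContinuous
    { toFun F := ContinuousMap.const _ (∫ z, F z ∂haarAddCircle)
      map_add' F G := by
        ext
        exact integral_add (F.continuous.integrable_of_hasCompactSupport (.of_compactSpace F))
          (G.continuous.integrable_of_hasCompactSupport (.of_compactSpace G))
      map_smul' c F := by ext; exact integral_const_mul c _ }
    1 fun F => by
      rw [one_mul, ContinuousMap.norm_le _ (norm_nonneg F)]
      intro
      simpa using norm_integral_le_of_norm_le_const (μ := haarAddCircle)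
        (.of_forall fun z => F.norm_coe_le_norm z)

theorem meanCLM_apply (F : C(AddCircle T, ℂ)) (y : AddCircle T) :
    meanCLM F y = ∫ z, F z ∂haarAddCircle :=
  rfl

theorem fourier_ne_one_of_not_isOfFinAddOrder {a : AddCircle T} (ha : ¬IsOfFinAddOrder a) {n : ℤ}
    (hn : n ≠ 0) : fourier n a ≠ 1 := by
  intro h
  rw [fourier_apply, Circle.coe_eq_one, ← toCircle_zero (T := T)] at h
  exact ha (isOfFinAddOrder_iff_zsmul_eq_zero.2 ⟨n, hn, injective_toCircle hT.out.ne' h⟩)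

theorem tendsto_birkhoffAverage_translate {a : AddCircle T} (ha : ¬IsOfFinAddOrder a)
    (F : C(AddCircle T, ℂ)) :
    Tendsto (birkhoffAverage ℂ (translate a) id · F) atTop (𝓝 (meanCLM F)) := by
  refine (translate a).tendsto_birkhoffAverage_of_mem_closure_span (lipschitzWith_translate a)
    meanCLM (s := Set.range fourier) ?_ (by rw [span_fourier_closure_eq_top]; trivial)
  rintro _ ⟨n, rfl⟩
  rcases eq_or_ne n 0 with rfl | hn
  · have hfix : IsFixedPt (translate a) (fourier (T := T) 0) := by
      ext y; simp [translate_apply]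
    have hmean : meanCLM (T := T) (fourier 0) = fourier 0 := by
      ext y; simp [meanCLM_apply]
    simpa [hmean] using hfix.tendsto_birkhoffAverage ℂ id
  · have hmean : meanCLM (fourier (T := T) n) = 0 := by
      ext y
      exact integral_eq_zero_of_add_right_eq_neg (fourier_add_half_inv_index hn hT.out)
    rw [hmean]
    exact (translate a).tendsto_birkhoffAverage_of_apply_eq_smul (lipschitzWith_translate a)
      (fourier_ne_one_of_not_isOfFinAddOrder ha hn) (translate_fourier a n)

theorem tendstoUniformly_birkhoffAverage_add {a : AddCircle T} (ha : ¬IsOfFinAddOrder a)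
    (F : C(AddCircle T, ℂ)) :
    TendstoUniformly (birkhoffAverage ℂ (· + a) F) (fun _ => ∫ z, F z ∂haarAddCircle) atTop := by
  have := ContinuousMap.tendsto_iff_tendstoUniformly.1 (tendsto_birkhoffAverage_translate ha F)
  simp only [birkhoffAverage_translate_apply] at this
  exact this

end AddCircle

theorem Irrational.tendstoUniformly_birkhoffAverage_add {α : ℝ} (hα : Irrational α) {f : ℝ → ℝ}
    (hf : Continuous f) (hper : Periodic f 1) :
    TendstoUniformly (birkhoffAverage ℝ (· + α) f) (fun _ => ∫ t in (0:ℝ)..1, f t) atTop := by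
  let F : C(AddCircle (1:ℝ), ℂ) :=
    ⟨fun z => (hper.lift z : ℂ), Complex.continuous_ofReal.comp (continuous_coinduced_dom.2 hf)⟩
  have hF : ∀ t : ℝ, F t = f t := fun t => congrArg Complex.ofReal (hper.lift_coe t)
  have hα' : ¬IsOfFinAddOrder (α : AddCircle (1:ℝ)) :=
    AddCircle.not_isOfFinAddOrder_iff_forall_rat_ne_div.2 fun q hq => hα ⟨q, by simpa using hq⟩
  have haverage : ∀ n (x : ℝ),
      birkhoffAverage ℂ (· + (α : AddCircle (1:ℝ))) F n x = birkhoffAverage ℝ (· + α) f n x := by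
    intro n x
    have horbit : ∀ k : ℕ, F (x + k • (α : AddCircle (1:ℝ))) = f (x + k • α) := fun k => by
      rw [← AddCircle.coe_nsmul, ← AddCircle.coe_add, hF]
    simp only [birkhoffAverage, birkhoffSum, add_right_iterate, horbit, smul_eq_mul]
    push_cast
    rfl
  have hmean : ∫ z, F z ∂AddCircle.haarAddCircle = ∫ t in (0:ℝ)..1, f t := by
    rw [AddCircle.integral_haarAddCircle, inv_one, one_smul,
      ← AddCircle.intervalIntegral_preimage 1 0, zero_add]
    simp only [hF, intervalIntegral.integral_ofReal]
  have := Complex.reCLM.uniformContinuous.comp_tendstoUniformly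
    ((AddCircle.tendstoUniformly_birkhoffAverage_add hα' F).comp ((↑) : ℝ → AddCircle (1:ℝ)))
  simpa [Function.comp_def, haverage, hmean] using this

theorem summable_exp_birkhoffSum {X : Type*} {f : X → X} {g : X → ℝ} {x : X} {c : ℝ}
    (h : Tendsto (birkhoffAverage ℝ f g · x) atTop (𝓝 c)) (hc : c < 0) :
    Summable fun n => Real.exp (birkhoffSum f g n x) := by
  refine .of_norm_bounded_eventually_nat
    (summable_geometric_of_lt_one (Real.exp_pos (c / 2)).le (Real.exp_lt_one_iff.2 (by linarith)))
    ?_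
  filter_upwards [h.eventually (gt_mem_nhds (by linarith : c < c / 2)), eventually_ne_atTop 0]
    with n hn hn0
  have hsum_eq : birkhoffSum f g n x = n * birkhoffAverage ℝ f g n x := by
    simp [birkhoffAverage, hn0]
  rw [Real.norm_of_nonneg (Real.exp_pos _).le, ← Real.exp_nat_mul, hsum_eq]
  gcongr

theorem Finset.prod_Icc_one_eq_prod_range {M : Type*} [CommMonoid M] (r : ℕ → M) (k : ℕ) :
    ∏ j ∈ Icc 1 k, r j = ∏ j ∈ range k, r (j + 1) := by
  rw [← Ico_add_one_right_eq_Icc, prod_Ico_eq_prod_range, Nat.add_sub_cancel]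
  simp only [add_comm 1]

theorem prod_Icc_eq_exp_birkhoffSum {r : ℝ → ℝ} (hr : ∀ y, 0 < r y) (α x : ℝ) (k : ℕ) :
    ∏ j ∈ Icc 1 k, r (x + j * α) =
      Real.exp (birkhoffSum (· + α) (fun y => Real.log (r y)) k (x + α)) := by
  simp only [birkhoffSum, add_right_iterate, Real.exp_sum, Real.exp_log (hr _),
    prod_Icc_one_eq_prod_range, nsmul_eq_mul]
  refine prod_congr rfl fun j _ => congrArg r ?_
  push_cast
  ring

theorem tsum_prod_Icc_eq_one_add_mul {K : Type*} [Field K] [TopologicalSpace K]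
    [IsTopologicalRing K] [T2Space K] {r : ℕ → K} (h : Summable fun k => ∏ j ∈ Icc 1 k, r j) :
    ∑' k, ∏ j ∈ Icc 1 k, r j = 1 + r 1 * ∑' k, ∏ j ∈ Icc 1 k, r (j + 1) := by
  rw [h.tsum_eq_zero_add, ← tsum_mul_left]
  simp only [prod_Icc_one_eq_prod_range, prod_range_zero, prod_range_succ', zero_add, mul_comm]

theorem statDensity_stationary {p : ℝ → ℝ} {α : ℝ} (hp : ∀ x, p x ≠ 0)
    (hsum : ∀ x, Summable fun k : ℕ => ∏ j ∈ Icc 1 k, (1 - p (x + j * α)) / p (x + j * α))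
    (x : ℝ) :
    statDensity p α x =
      p (x - α) * statDensity p α (x - α) + (1 - p (x + α)) * statDensity p α (x + α) := by
  set S : ℝ → ℝ := fun y => ∑' k : ℕ, ∏ j ∈ Icc 1 k, (1 - p (y + j * α)) / p (y + j * α)
  have renewal : ∀ y, S y = 1 + (1 - p (y + α)) / p (y + α) * S (y + α) := by
    intro y
    have shift : ∀ j : ℕ, y + ((j + 1 : ℕ) : ℝ) * α = y + α + j * α := fun j => by push_cast; ring
    simpa only [shift, Nat.cast_one, one_mul] using tsum_prod_Icc_eq_one_add_mul (hsum y)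
  have hS : ∀ y, statDensity p α y = S y / p y := fun y => one_div_mul_eq_div _ _
  have hprev := renewal (x - α)
  rw [sub_add_cancel] at hprev
  have hnext : (1 - p (x + α)) * (S (x + α) / p (x + α)) = S x - 1 := by
    rw [renewal x]; ring
  rw [hS, hS, hS, mul_div_cancel₀ _ (hp _), hprev, hnext]
  field_simp [hp x]
  ring

/-- In the asymmetric case `∫ ln p > ∫ ln (1-p)`, the series defining `ρ` converges for
Lebesgue-almost every `x`, and `ρ` satisfies the stationarity equation
`ρ(x) = p(x-α) ρ(x-α) + (1-p(x+α)) ρ(x+α)` almost everywhere. -/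
theorem stationary_density_asymmetric (α : ℝ) (hα : Irrational α)
    (p : ℝ → ℝ) (hsm : ContDiff ℝ (⊤ : ℕ∞) p) (hper : Function.Periodic p 1)
    (hrange : ∀ x, p x ∈ Set.Ioo (0:ℝ) 1)
    (hasym : ∫ x in (0:ℝ)..1, Real.log (1 - p x) < ∫ x in (0:ℝ)..1, Real.log (p x)) :
    (∀ᵐ x : ℝ, Summable (fun k : ℕ =>
        ∏ j ∈ Finset.Icc 1 k, (1 - p (x + (j:ℝ) * α)) / p (x + (j:ℝ) * α))) ∧
    (∀ᵐ x : ℝ, statDensity p α x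
        = p (x - α) * statDensity p α (x - α)
          + (1 - p (x + α)) * statDensity p α (x + α)) := by
  have hp : ∀ x, 0 < p x := fun x => (hrange x).1
  have hq : ∀ x, 0 < 1 - p x := fun x => sub_pos.2 (hrange x).2
  have hlog_p : Continuous fun x => Real.log (p x) := hsm.continuous.log fun x => (hp x).ne'
  have hlog_q : Continuous fun x => Real.log (1 - p x) :=
    (continuous_const.sub hsm.continuous).log fun x => (hq x).ne'
  set g : ℝ → ℝ := fun x => Real.log ((1 - p x) / p x)
  have hg : g = fun x => Real.log (1 - p x) - Real.log (p x) :=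
    funext fun x => Real.log_div (hq x).ne' (hp x).ne'
  have hg_neg : ∫ x in (0:ℝ)..1, g x < 0 := by
    rw [hg, intervalIntegral.integral_sub (hlog_q.intervalIntegrable _ _)
      (hlog_p.intervalIntegrable _ _)]
    linarith
  have hg_cont : Continuous g := hg ▸ hlog_q.sub hlog_p
  have hbirkhoff := hα.tendstoUniformly_birkhoffAverage_add hg_cont
    (hper.comp fun t => Real.log ((1 - t) / t))
  have hsum : ∀ x,
      Summable fun k : ℕ => ∏ j ∈ Finset.Icc 1 k, (1 - p (x + j * α)) / p (x + j * α) :=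
    fun x => (summable_exp_birkhoffSum (hbirkhoff.tendsto_at (x + α)) hg_neg).congr fun k =>
      (prod_Icc_eq_exp_birkhoffSum (fun y => div_pos (hq y) (hp y)) α x k).symm
  exact ⟨.of_forall hsum, .of_forall (statDensity_stationary (fun x => (hp x).ne') hsum)⟩
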